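/- arXiv:2407.03694 — 4 statements merged into one kernel-verified Lean document; each statement's English description precedes it below -/
import Mathlib

section
/- For any z ∈ ℝ and any f ∈ L²(ℝ, ℂ), the sequence f_n(s) = f(s)/(z-s) · χ_{(z-1/n, z+1/n)^c}(s) satisfies: each f_n is in the domain of X (i.e. x·f_n(x) ∈ L²), and (z - X)f_n → f in L² as n → ∞. Hence the range of z - X is dense in L²(ℝ, ℂ). -/
/-!
Off the interval of radius `r` around `z` we have `|z - s| ≥ r`, so dividing `f` by `z - s` there
costs at most a factor `r⁻¹` and stays in `L²`; then `s · f_n = z · f_n - (z - s) · f_n` is in `L²`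
as well. Multiplying back by `z - s` returns `f` with the interval cut out, so the error is the
restriction of `f` to an interval of length `2 / n`, whose `L²` norm tends to zero by absolute
continuity of the integral.
-/

open MeasureTheory Filter Topology Set
open scoped ENNReal

theorem MeasureTheory.MemLp.tendsto_eLpNorm_indicator {α E ι : Type*} {m : MeasurableSpace α}
    {μ : Measure α} [NormedAddCommGroup E] {p : ℝ≥0∞} {f : α → E} (hf : MemLp f p μ)
    (hp_one : 1 ≤ p) (hp_top : p ≠ ∞) {l : Filter ι} {s : ι → Set α}
    (hs : ∀ i, MeasurableSet (s i)) (hμs : Tendsto (fun i => μ (s i)) l (𝓝 0)) :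
    Tendsto (fun i => eLpNorm ((s i).indicator f) p μ) l (𝓝 0) := by
  rw [ENNReal.tendsto_nhds_zero] at hμs ⊢
  intro ε hε
  rcases eq_or_ne ε ∞ with rfl | hε_top
  · exact Eventually.of_forall fun _ => le_top
  obtain ⟨δ, hδ, hsmall⟩ :=
    hf.eLpNorm_indicator_le hp_one hp_top (ENNReal.toReal_pos hε.ne' hε_top)
  filter_upwards [hμs _ (ENNReal.ofReal_pos.2 hδ)] with i hi
  simpa [ENNReal.ofReal_toReal hε_top] using hsmall (s i) (hs i) hi

theorem tendsto_volume_Ioo_sub_one_div_add_one_div (z : ℝ) :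
    Tendsto (fun n : ℕ => volume (Ioo (z - 1 / n) (z + 1 / n))) atTop (𝓝 0) := by
  simp_rw [Real.volume_Ioo, show ∀ n : ℕ, z + 1 / n - (z - 1 / n) = 2 / n by intro; ring]
  rw [← ENNReal.ofReal_zero]
  exact ENNReal.tendsto_ofReal (tendsto_const_div_atTop_nhds_zero_nat 2)

noncomputable def truncatedResolvent (z r : ℝ) (f : ℝ → ℂ) : ℝ → ℂ :=
  (Ioo (z - r) (z + r))ᶜ.indicator fun s => f s / (z - s)

section truncatedResolvent

variable {z r : ℝ} {f : ℝ → ℂ}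

theorem norm_truncatedResolvent_le (hr : 0 < r) (s : ℝ) :
    ‖truncatedResolvent z r f s‖ ≤ r⁻¹ * ‖f s‖ := by
  by_cases hs : s ∈ Ioo (z - r) (z + r)
  · simp only [truncatedResolvent, indicator_of_notMem (notMem_compl_iff.2 hs), norm_zero]
    positivity
  have hdist : r ≤ |z - s| := by
    rw [← Real.ball_eq_Ioo, Metric.mem_ball, not_lt, Real.dist_eq, abs_sub_comm] at hs
    exact hs
  rw [truncatedResolvent, indicator_of_mem (mem_compl hs), norm_div, ← Complex.ofReal_sub,
    Complex.norm_real, Real.norm_eq_abs, div_eq_inv_mul]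
  gcongr

theorem sub_mul_truncatedResolvent (hr : 0 < r) :
    (fun s : ℝ => ((z : ℂ) - s) * truncatedResolvent z r f s) =
      (Ioo (z - r) (z + r))ᶜ.indicator f := by
  ext s
  rw [truncatedResolvent, indicator_apply, indicator_apply]
  split_ifs with hs
  · have hzs : (z : ℂ) - s ≠ 0 := by
      rw [← Complex.ofReal_sub, Complex.ofReal_ne_zero, sub_ne_zero]
      rintro rfl
      exact hs ⟨by linarith, by linarith⟩
    exact mul_div_cancel₀ _ hzs
  · exact mul_zero _

variable {p : ℝ≥0∞} {μ : Measure ℝ}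

theorem memLp_truncatedResolvent (hf : MemLp f p μ) (hr : 0 < r) :
    MemLp (truncatedResolvent z r f) p μ := by
  refine hf.of_le_mul (c := r⁻¹) ?_ (Eventually.of_forall (norm_truncatedResolvent_le hr))
  have hquot : AEStronglyMeasurable (fun s : ℝ => f s / ((z : ℂ) - s)) μ := by
    simp_rw [div_eq_mul_inv]
    exact hf.1.mul (Measurable.aestronglyMeasurable (by fun_prop))
  exact hquot.indicator measurableSet_Ioo.compl

theorem memLp_mul_truncatedResolvent (hf : MemLp f p μ) (hr : 0 < r) :
    MemLp (fun s : ℝ => (s : ℂ) * truncatedResolvent z r f s) p μ := by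
  have hsplit : (fun s : ℝ => (s : ℂ) * truncatedResolvent z r f s) =
      (fun s => (z : ℂ) * truncatedResolvent z r f s) -
        fun s => ((z : ℂ) - s) * truncatedResolvent z r f s := by
    ext s
    simp only [Pi.sub_apply]
    ring
  rw [hsplit, sub_mul_truncatedResolvent hr]
  exact ((memLp_truncatedResolvent hf hr).const_mul _).sub (hf.indicator measurableSet_Ioo.compl)

theorem eLpNorm_sub_mul_truncatedResolvent_sub (hr : 0 < r) :
    eLpNorm (fun s : ℝ => ((z : ℂ) - s) * truncatedResolvent z r f s - f s) p μ =
      eLpNorm ((Ioo (z - r) (z + r)).indicator f) p μ := by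
  have hsub := congrFun (sub_mul_truncatedResolvent (z := z) (f := f) hr)
  simp_rw [hsub, indicator_compl, Pi.sub_apply, sub_sub_cancel_left]
  exact eLpNorm_neg _ p μ

end truncatedResolvent

theorem range_z_sub_X_dense (z : ℝ) (f : ℝ → ℂ) (hf : MemLp f 2 (volume : Measure ℝ))
    (fn : ℕ → ℝ → ℂ)
    (hfn : ∀ n s, fn n s =
      if s ∈ Set.Ioo (z - 1 / n) (z + 1 / n) then 0 else f s / ((z : ℂ) - s)) :
    (∀ n : ℕ, 1 ≤ n → MemLp (fun s : ℝ => (s : ℂ) * fn n s) 2 (volume : Measure ℝ)) ∧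
    Tendsto (fun n : ℕ =>
        eLpNorm (fun s : ℝ => ((z : ℂ) - s) * fn n s - f s) 2 (volume : Measure ℝ))
      atTop (𝓝 0) ∧
    ∀ δ : ℝ, 0 < δ → ∃ h : ℝ → ℂ, MemLp (fun s : ℝ => (s : ℂ) * h s) 2 (volume : Measure ℝ) ∧
      eLpNorm (fun s : ℝ => ((z : ℂ) - s) * h s - f s) 2 (volume : Measure ℝ) <
        ENNReal.ofReal δ := by
  obtain rfl : fn = fun n : ℕ => truncatedResolvent z (1 / n) f := by
    ext n s
    simp only [hfn, truncatedResolvent, indicator_apply, mem_compl_iff, ite_not]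
  have hmem (n : ℕ) (hn : 1 ≤ n) :
      MemLp (fun s : ℝ => (s : ℂ) * truncatedResolvent z (1 / n) f s) 2 volume :=
    memLp_mul_truncatedResolvent hf (one_div_pos.2 (Nat.cast_pos.2 hn))
  have hlim : Tendsto (fun n : ℕ => eLpNorm (fun s : ℝ =>
      ((z : ℂ) - s) * truncatedResolvent z (1 / n) f s - f s) 2 volume) atTop (𝓝 0) := by
    refine (hf.tendsto_eLpNorm_indicator one_le_two ENNReal.ofNat_ne_top
      (fun _ => measurableSet_Ioo) (tendsto_volume_Ioo_sub_one_div_add_one_div z)).congr' ?_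
    filter_upwards [eventually_ge_atTop 1] with n hn
    exact (eLpNorm_sub_mul_truncatedResolvent_sub (one_div_pos.2 (Nat.cast_pos.2 hn))).symm
  refine ⟨hmem, hlim, fun δ hδ => ?_⟩
  obtain ⟨n, hn, hsmall⟩ :=
    ((eventually_ge_atTop 1).and (hlim.eventually_lt_const (ENNReal.ofReal_pos.2 hδ))).exists
  exact ⟨_, hmem n hn, hsmall⟩
end

section
/- For z ∈ ℝ and ε > 0, the function g_ε(s) = ε^{1/2} π^{-1/4} e^{-ε²s²/2} e^{i(sz - s²/2)} satisfies: ‖g_ε‖ = 1, ∫_ℝ s²|g_ε(s)|² ds = 1/(2ε²), and ‖(z - (X+P))g_ε‖² = ε²/2. In particular ‖(z - (X+P))g_ε‖ < ε, so g_ε is an approximate eigenvector of X + P for the value z. -/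
/-!
`|g_ε|²` is the normalized Gaussian `(ε/√π) e^{-ε²s²}`, so the first two identities are the
Gaussian integral and its second moment. The chirp `e^{-is²/2}` is chosen so that `i` times the
derivative of the phase `sz - s²/2` cancels `z - s`: only the envelope's derivative survives, and
`(z - s) g_ε + i g_ε' = -i ε² s g_ε`. Hence `‖(z - (X+P)) g_ε‖² = ε⁴ ∫ s² |g_ε|² = ε²/2 < ε²`.
-/

open MeasureTheory Real

lemma integral_sq_mul_exp_neg_mul_sq {b : ℝ} (hb : 0 < b) :
    ∫ x : ℝ, x ^ 2 * rexp (-b * x ^ 2) = √(π / b) / (2 * b) := by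
  have hmoment : Integrable fun x : ℝ => x ^ 2 * rexp (-b * x ^ 2) := by
    simpa using integrable_rpow_mul_exp_neg_mul_sq hb (s := 2) (by norm_num)
  have hderiv (x : ℝ) : HasDerivAt (fun x : ℝ => x * rexp (-b * x ^ 2))
      (rexp (-b * x ^ 2) - 2 * b * (x ^ 2 * rexp (-b * x ^ 2))) x := by
    refine ((hasDerivAt_id' x).mul ((hasDerivAt_pow 2 x).const_mul (-b)).exp).congr_deriv ?_
    ring
  -- `x e^{-b x²}` is integrable, so the integral of its derivative vanishes
  have h := integral_eq_zero_of_hasDerivAt_of_integrable hderiv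
    ((integrable_exp_neg_mul_sq hb).sub (hmoment.const_mul _)) (integrable_mul_exp_neg_mul_sq hb)
  rw [integral_sub (integrable_exp_neg_mul_sq hb) (hmoment.const_mul _), integral_const_mul,
    integral_gaussian] at h
  rw [eq_div_iff (by positivity)]
  linarith

noncomputable def chirpedGaussian (ε z s : ℝ) : ℂ :=
  (ε ^ ((1 : ℝ) / 2) : ℝ) * ((π ^ (-(1 : ℝ) / 4) : ℝ) : ℂ) *
    Complex.exp (-(ε : ℂ) ^ 2 * s ^ 2 / 2) * Complex.exp (Complex.I * (s * z - s ^ 2 / 2))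

lemma norm_chirpedGaussian_sq {ε : ℝ} (hε : 0 ≤ ε) (z s : ℝ) :
    ‖chirpedGaussian ε z s‖ ^ 2 = ε / √π * rexp (-ε ^ 2 * s ^ 2) := by
  have hgauss : -(ε : ℂ) ^ 2 * s ^ 2 / 2 = ((-ε ^ 2 * s ^ 2 / 2 : ℝ) : ℂ) := by push_cast; ring
  have hphase : Complex.I * (s * z - s ^ 2 / 2) = ((s * z - s ^ 2 / 2 : ℝ) : ℂ) * Complex.I := by
    push_cast; ring
  have hε_sq : (ε ^ ((1 : ℝ) / 2)) ^ 2 = ε := by rw [← sqrt_eq_rpow, sq_sqrt hε]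
  have hπ_sq : (π ^ (-(1 : ℝ) / 4)) ^ 2 = (√π)⁻¹ := by
    rw [← rpow_natCast, ← rpow_mul pi_pos.le, sqrt_eq_rpow, ← rpow_neg pi_pos.le]
    norm_num
  have hexp_sq : rexp (-ε ^ 2 * s ^ 2 / 2) ^ 2 = rexp (-ε ^ 2 * s ^ 2) := by
    rw [← exp_nat_mul]; ring_nf
  rw [chirpedGaussian, hgauss, hphase, ← Complex.ofReal_exp]
  simp only [norm_mul, Complex.norm_real, Complex.norm_exp_ofReal_mul_I, mul_one, norm_eq_abs,
    abs_of_nonneg (rpow_nonneg hε _), abs_of_nonneg (rpow_nonneg pi_pos.le _), abs_exp, mul_pow,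
    hε_sq, hπ_sq, hexp_sq]
  ring

lemma hasDerivAt_cexp_quadratic (a b : ℂ) (s : ℝ) :
    HasDerivAt (fun t : ℝ => Complex.exp (a * t ^ 2 + b * t))
      (Complex.exp (a * s ^ 2 + b * s) * (2 * a * s + b)) s := by
  have h : HasDerivAt (fun w : ℂ => a * w ^ 2 + b * w) (2 * a * s + b) s :=
    (((hasDerivAt_pow 2 (s : ℂ)).const_mul a).add
      ((hasDerivAt_id' (s : ℂ)).const_mul b)).congr_deriv (by ring)
  exact h.cexp.comp_ofReal

lemma chirpedGaussian_eq_mul_cexp (ε z : ℝ) :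
    chirpedGaussian ε z = fun s : ℝ => ((ε ^ ((1 : ℝ) / 2) : ℝ) * ((π ^ (-(1 : ℝ) / 4) : ℝ) : ℂ)) *
      Complex.exp (-((ε : ℂ) ^ 2 + Complex.I) / 2 * s ^ 2 + Complex.I * z * s) := by
  ext s
  rw [chirpedGaussian, mul_assoc, ← Complex.exp_add]
  ring_nf

lemma hasDerivAt_chirpedGaussian (ε z s : ℝ) :
    HasDerivAt (chirpedGaussian ε z)
      (chirpedGaussian ε z s * (-((ε : ℂ) ^ 2 + Complex.I) * s + Complex.I * z)) s := by
  rw [chirpedGaussian_eq_mul_cexp]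
  refine ((hasDerivAt_cexp_quadratic _ _ s).const_mul _).congr_deriv ?_
  ring

lemma sub_mul_chirpedGaussian_add_I_mul_deriv (ε z s : ℝ) :
    ((z : ℂ) - s) * chirpedGaussian ε z s + Complex.I * deriv (chirpedGaussian ε z) s =
      -Complex.I * ((ε ^ 2 * s : ℝ) : ℂ) * chirpedGaussian ε z s := by
  rw [(hasDerivAt_chirpedGaussian ε z s).deriv]
  push_cast
  linear_combination (chirpedGaussian ε z s * ((z : ℂ) - s)) * Complex.I_sq

lemma integral_norm_chirpedGaussian_sq {ε : ℝ} (hε : 0 < ε) (z : ℝ) :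
    ∫ s, ‖chirpedGaussian ε z s‖ ^ 2 = 1 := by
  simp_rw [norm_chirpedGaussian_sq hε.le]
  rw [integral_const_mul, integral_gaussian, sqrt_div pi_pos.le, sqrt_sq hε.le]
  field_simp

lemma integral_sq_mul_norm_chirpedGaussian_sq {ε : ℝ} (hε : 0 < ε) (z : ℝ) :
    ∫ s, s ^ 2 * ‖chirpedGaussian ε z s‖ ^ 2 = 1 / (2 * ε ^ 2) := by
  simp_rw [norm_chirpedGaussian_sq hε.le, mul_left_comm _ (ε / √π)]
  rw [integral_const_mul, integral_sq_mul_exp_neg_mul_sq (by positivity), sqrt_div pi_pos.le,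
    sqrt_sq hε.le]
  field_simp

theorem approx_eigenvector_X_add_P (z ε : ℝ) (hε : 0 < ε)
    (g : ℝ → ℂ)
    (hg : ∀ s : ℝ, g s = (ε ^ ((1 : ℝ) / 2) : ℝ) * ((π ^ (-(1 : ℝ) / 4) : ℝ) : ℂ) *
        Complex.exp (-(ε : ℂ) ^ 2 * s ^ 2 / 2) *
        Complex.exp (Complex.I * (s * z - s ^ 2 / 2))) :
    (∫ s : ℝ, ‖g s‖ ^ 2) = 1 ∧
    (∫ s : ℝ, s ^ 2 * ‖g s‖ ^ 2) = 1 / (2 * ε ^ 2) ∧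
    (∫ s : ℝ, ‖((z : ℂ) - s) * g s + Complex.I * deriv g s‖ ^ 2) = ε ^ 2 / 2 ∧
    Real.sqrt (∫ s : ℝ, ‖((z : ℂ) - s) * g s + Complex.I * deriv g s‖ ^ 2) < ε := by
  obtain rfl : g = chirpedGaussian ε z := funext hg
  have hresidual : ∫ s, ‖((z : ℂ) - s) * chirpedGaussian ε z s +
      Complex.I * deriv (chirpedGaussian ε z) s‖ ^ 2 = ε ^ 2 / 2 := by
    simp only [sub_mul_chirpedGaussian_add_I_mul_deriv, norm_mul, norm_neg, Complex.norm_I,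
      Complex.norm_real, norm_eq_abs, one_mul, mul_pow, sq_abs, mul_assoc]
    rw [integral_const_mul, integral_sq_mul_norm_chirpedGaussian_sq hε]
    field_simp
  refine ⟨integral_norm_chirpedGaussian_sq hε z, integral_sq_mul_norm_chirpedGaussian_sq hε z,
    hresidual, ?_⟩
  rw [hresidual, sqrt_lt' hε]
  linarith [pow_pos hε 2]
end

section
/- For all real t, (1/(2π^{3/2})) · ∫_ℝ e^{itx} (∫_ℝ e^{-(1+i)s²/2} e^{ixs} ds)(∫_ℝ e^{-(1-i)w²/2} e^{-ixw} dw) dx = e^{-t²/2}. -/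
/-!
Each inner integral is a Gaussian Fourier transform,
`∫ e^{-a s²/2} e^{±ixs} ds = (2π/a)^{1/2} e^{-x²/(2a)}`. For `a = 1 ± i` the two exponents add up
to `-x²/2` because `1/(1+i) + 1/(1-i) = 1`, and the two square roots are `z^{1/2}` and `(z̄)^{1/2}`
for `z = π(1-i)`, whose product is `|z| = π√2`. What remains is the Fourier transform of the
standard Gaussian, `√(2π) e^{-t²/2}`, and `π√2 · √(2π) = 2π^{3/2}`.
-/

open MeasureTheory Real Complex ComplexConjugate

theorem integral_cexp_neg_mul_sq_div_two_mul_cexp {a : ℂ} (ha : 0 < a.re) (x : ℂ) :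
    ∫ s : ℝ, cexp (-a * s ^ 2 / 2) * cexp (I * x * s) =
      (2 * π / a) ^ (1 / 2 : ℂ) * cexp (-x ^ 2 / (2 * a)) := by
  have hb : 0 < (a / 2).re := by simpa using ha
  have h := fourierIntegral_gaussian hb x
  rw [div_div_eq_mul_div, mul_comm (π : ℂ), show 4 * (a / 2) = 2 * a by ring] at h
  rw [← h]
  congr 1 with s
  rw [mul_comm]
  congr 2; ring

theorem integral_cexp_neg_mul_sq_div_two_mul_cexp_neg {a : ℂ} (ha : 0 < a.re) (x : ℂ) :
    ∫ s : ℝ, cexp (-a * s ^ 2 / 2) * cexp (-I * x * s) =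
      (2 * π / a) ^ (1 / 2 : ℂ) * cexp (-x ^ 2 / (2 * a)) := by
  simpa [mul_neg, neg_mul] using integral_cexp_neg_mul_sq_div_two_mul_cexp ha (-x)

theorem cpow_half_mul_conj_cpow_half {z : ℂ} (hz : z.arg ≠ π) :
    z ^ (1 / 2 : ℂ) * conj z ^ (1 / 2 : ℂ) = ‖z‖ := by
  have hhalf : (1 / 2 : ℂ) = ((1 / 2 : ℝ) : ℂ) := by norm_num
  rw [conj_cpow _ _ hz, hhalf, conj_ofReal, mul_conj', norm_cpow_real, ← sqrt_eq_rpow,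
    ← ofReal_pow, sq_sqrt (norm_nonneg z)]

theorem pi_mul_sqrt_two_mul_cpow_half :
    ((π * √2 : ℝ) : ℂ) * (2 * π) ^ (1 / 2 : ℂ) = 2 * π ^ (3 / 2 : ℂ) := by
  have h2π : (2 * π : ℂ) = ((2 * π : ℝ) : ℂ) := by push_cast; rfl
  rw [h2π, show (1 / 2 : ℂ) = ((1 / 2 : ℝ) : ℂ) by norm_num,
    show (3 / 2 : ℂ) = ((3 / 2 : ℝ) : ℂ) by norm_num, ← ofReal_cpow (by positivity),
    ← ofReal_cpow pi_pos.le, ← sqrt_eq_rpow]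
  norm_cast
  rw [sqrt_mul zero_le_two, show (3 / 2 : ℝ) = 1 + 1 / 2 by norm_num, rpow_add pi_pos, rpow_one,
    ← sqrt_eq_rpow]
  linear_combination π * √π * sq_sqrt zero_le_two

theorem integral_gaussian_one_add_I_mul_integral_gaussian_one_sub_I (x : ℝ) :
    (∫ s : ℝ, cexp (-(1 + I) * s ^ 2 / 2) * cexp (I * x * s)) *
      (∫ w : ℝ, cexp (-(1 - I) * w ^ 2 / 2) * cexp (-I * x * w)) =
      ((π * √2 : ℝ) : ℂ) * cexp (-1 * x ^ 2 / 2) := by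
  rw [integral_cexp_neg_mul_sq_div_two_mul_cexp (by simp),
    integral_cexp_neg_mul_sq_div_two_mul_cexp_neg (by simp)]
  have h1 : (1 + I : ℂ) ≠ 0 := by simp [Complex.ext_iff]
  have h2 : (1 - I : ℂ) ≠ 0 := by simp [Complex.ext_iff]
  set z : ℂ := π * (1 - I) with hz_def
  have hz : 2 * π / (1 + I) = z := by
    field_simp
    linear_combination (π : ℂ) * I_sq
  have hz' : 2 * π / (1 - I) = conj z := by
    rw [hz_def, map_mul, conj_ofReal, map_sub, map_one, conj_I]
    field_simp
    linear_combination I_sq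
  have harg : z.arg ≠ π := by
    have hre : z.re = π := by simp [hz_def]
    rw [Ne, arg_eq_pi_iff, hre]
    exact fun h => lt_asymm pi_pos h.1
  have hnorm : ‖z‖ = π * √2 := by
    rw [hz_def, norm_mul, norm_real, norm_of_nonneg pi_pos.le, norm_def]
    norm_num [normSq_apply]
  have hexp : -(x : ℂ) ^ 2 / (2 * (1 + I)) + -(x : ℂ) ^ 2 / (2 * (1 - I)) = -1 * x ^ 2 / 2 := by
    field_simp
    linear_combination -(x : ℂ) ^ 2 * I_sq
  calc _ = (z ^ (1 / 2 : ℂ) * conj z ^ (1 / 2 : ℂ)) *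
        cexp (-(x : ℂ) ^ 2 / (2 * (1 + I)) + -(x : ℂ) ^ 2 / (2 * (1 - I))) := by
        rw [hz, hz', Complex.exp_add]; ring
    _ = _ := by rw [cpow_half_mul_conj_cpow_half harg, hnorm, hexp]

theorem vacuum_char_X_add_P (t : ℝ) :
    (1 / (2 * (π : ℂ) ^ ((3 : ℂ) / 2))) *
      ∫ x : ℝ, Complex.exp (Complex.I * t * x) *
        (∫ s : ℝ, Complex.exp (-(1 + Complex.I) * s ^ 2 / 2) * Complex.exp (Complex.I * x * s)) *
        (∫ w : ℝ, Complex.exp (-(1 - Complex.I) * w ^ 2 / 2) * Complex.exp (-Complex.I * x * w)) =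
      Complex.exp (-(t : ℂ) ^ 2 / 2) := by
  have hintegrand : ∀ x : ℝ, cexp (I * t * x) *
      (∫ s : ℝ, cexp (-(1 + I) * s ^ 2 / 2) * cexp (I * x * s)) *
      (∫ w : ℝ, cexp (-(1 - I) * w ^ 2 / 2) * cexp (-I * x * w)) =
      ((π * √2 : ℝ) : ℂ) * (cexp (-1 * x ^ 2 / 2) * cexp (I * t * x)) := fun x => by
    rw [mul_assoc, integral_gaussian_one_add_I_mul_integral_gaussian_one_sub_I]; ring
  have hne : (2 * (π : ℂ) ^ ((3 : ℂ) / 2)) ≠ 0 := by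
    simp [cpow_eq_zero_iff, pi_ne_zero]
  simp_rw [hintegrand]
  rw [integral_const_mul, integral_cexp_neg_mul_sq_div_two_mul_cexp (by simp), div_one, mul_one,
    ← mul_assoc ((π * √2 : ℝ) : ℂ), pi_mul_sqrt_two_mul_cpow_half, one_div,
    inv_mul_cancel_left₀ hne]
end

section
/- For z ∈ ℝ and ε > 0, define g_ε(s) = Γ(0, 2ε²)^{-1/2} · e^{(-1/2 + iz/2)·ln|s|} · e^{-s²} for |s| ≥ ε and g_ε(s) = 0 for |s| < ε, where Γ(0, b) = ∫_b^∞ t^{-1} e^{-t} dt. Then ‖g_ε‖ = 1 and ‖(z - (XP+PX))g_ε‖ = 2·Γ(0, 2ε²)^{-1/2}·e^{-ε²}·√(1 + 2ε²), which tends to 0 as ε → 0⁺ (since Γ(0, 2ε²) → ∞). Hence every real z is an approximate eigenvalue of XP + PX. -/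
/-!
On `s ≠ 0` the function `|s|^{-1/2 + iz/2}` is an exact, but non-normalizable, eigenfunction of
`XP + PX = -i(2s d/ds + 1)` with eigenvalue `z`. Multiplying it by `e^{-s²}` and cutting it off
at `|s| < ε` gives an `L²` function `g_ε` with `(z - (XP + PX)) g_ε = -4i s² g_ε` outside the
null set `{±ε}` (`deriv` is pointwise, so the jumps contribute nothing). By evenness and
the substitution `u = 2s²` the two `L²` norms reduce to `Γ(0, 2ε²)` and to
`∫_{2ε²}^∞ u e^{-u} du = (1 + 2ε²) e^{-2ε²}`. Finally `Γ(0, b) ≥ e^{-c} log (c / b)` for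
`b ≤ c`, so `Γ(0, 2ε²) → ∞` as `ε → 0⁺`.
-/

open MeasureTheory Real Filter Topology

/-- The upper incomplete Gamma function at the first argument `0`:
`Γ(0, b) = ∫_b^∞ t⁻¹ e^{-t} dt`. -/
noncomputable def incGamma0 (b : ℝ) : ℝ := ∫ t in Set.Ioi b, t⁻¹ * Real.exp (-t)

open Set
open Complex (I)

lemma integrableOn_inv_mul_exp_neg_Ioi {b : ℝ} (hb : 0 < b) :
    IntegrableOn (fun t : ℝ => t⁻¹ * exp (-t)) (Ioi b) := by
  refine ((exp_neg_integrableOn_Ioi b one_pos).const_mul b⁻¹).mono' (by fun_prop) ?_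
  filter_upwards [ae_restrict_mem measurableSet_Ioi] with t (ht : b < t)
  have ht0 : 0 < t := hb.trans ht
  rw [norm_of_nonneg (by positivity), neg_one_mul]
  gcongr

lemma exp_neg_mul_log_div_le_incGamma0 {b c : ℝ} (hb : 0 < b) (hbc : b ≤ c) :
    exp (-c) * log (c / b) ≤ incGamma0 b := by
  have hinv : ContinuousOn (fun t : ℝ => t⁻¹) (uIcc b c) :=
    continuousOn_inv₀.mono fun t ht =>
      ne_of_gt (hb.trans_le (by rw [uIcc_of_le hbc] at ht; exact ht.1))
  calc exp (-c) * log (c / b) = ∫ t in b..c, t⁻¹ * exp (-c) := by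
        rw [intervalIntegral.integral_mul_const, integral_inv_of_pos hb (hb.trans_le hbc), mul_comm]
    _ ≤ ∫ t in b..c, t⁻¹ * exp (-t) := by
        refine intervalIntegral.integral_mono_on hbc
          (hinv.mul continuousOn_const).intervalIntegrable
          (hinv.mul (by fun_prop)).intervalIntegrable fun t ht => ?_
        have : 0 < t := hb.trans_le ht.1
        gcongr; exact ht.2
    _ = ∫ t in Ioc b c, t⁻¹ * exp (-t) := intervalIntegral.integral_of_le hbc
    _ ≤ incGamma0 b := by
        refine setIntegral_mono_set (integrableOn_inv_mul_exp_neg_Ioi hb) ?_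
          Ioc_subset_Ioi_self.eventuallyLE
        filter_upwards [ae_restrict_mem measurableSet_Ioi] with t (ht : b < t)
        have : 0 < t := hb.trans ht
        positivity

lemma incGamma0_pos {b : ℝ} (hb : 0 < b) : 0 < incGamma0 b := by
  refine lt_of_lt_of_le ?_ (exp_neg_mul_log_div_le_incGamma0 hb (by linarith : b ≤ 2 * b))
  rw [mul_div_cancel_right₀ _ hb.ne']
  have := Real.log_pos one_lt_two
  positivity

lemma tendsto_incGamma0_nhdsGT_zero : Tendsto incGamma0 (𝓝[>] 0) atTop := by
  have hlog : Tendsto (fun b => exp (-1) * log (1 / b)) (𝓝[>] 0) atTop := by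
    simp only [one_div, log_inv]
    exact (tendsto_neg_atBot_atTop.comp tendsto_log_nhdsGT_zero).const_mul_atTop (exp_pos _)
  refine tendsto_atTop_mono' _ ?_ hlog
  filter_upwards [Ioc_mem_nhdsGT zero_lt_one] with b hb
  exact exp_neg_mul_log_div_le_incGamma0 hb.1 hb.2

lemma tendsto_two_mul_sq_nhdsGT_zero :
    Tendsto (fun ε : ℝ => 2 * ε ^ 2) (𝓝[>] 0) (𝓝[>] 0) := by
  refine tendsto_nhdsWithin_of_tendsto_nhds_of_eventually_within _ ?_ ?_
  · exact ((by fun_prop : Continuous fun ε : ℝ => 2 * ε ^ 2).tendsto' 0 0 (by simp)).mono_left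
      nhdsWithin_le_nhds
  · filter_upwards [self_mem_nhdsWithin] with ε (hε : 0 < ε)
    exact mem_Ioi.2 (by positivity)

lemma image_mul_sq_Ioi {a ε : ℝ} (ha : 0 < a) (hε : 0 ≤ ε) :
    (fun t => a * t ^ 2) '' Ioi ε = Ioi (a * ε ^ 2) := by
  ext y
  constructor
  · rintro ⟨t, ht : ε < t, rfl⟩
    exact mem_Ioi.2 (show a * ε ^ 2 < a * t ^ 2 by gcongr)
  · intro (hy : a * ε ^ 2 < y)
    have hya : 0 ≤ y / a := div_nonneg ((by positivity : 0 ≤ a * ε ^ 2).trans hy.le) ha.le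
    refine ⟨√(y / a), ?_, by simp only; rw [sq_sqrt hya]; field_simp⟩
    exact (lt_sqrt hε).2 ((lt_div_iff₀' ha).2 hy)

lemma integral_Ioi_comp_mul_sq {E : Type*} [NormedAddCommGroup E] [NormedSpace ℝ E]
    {a ε : ℝ} (ha : 0 < a) (hε : 0 ≤ ε) (f : ℝ → E) :
    ∫ t in Ioi ε, (2 * a * t) • f (a * t ^ 2) = ∫ u in Ioi (a * ε ^ 2), f u := by
  have hderiv : ∀ t ∈ Ioi ε, HasDerivWithinAt (fun t => a * t ^ 2) (2 * a * t) (Ioi ε) t :=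
    fun t _ => by simpa [mul_comm, mul_left_comm, mul_assoc] using
      ((hasDerivAt_pow 2 t).const_mul a).hasDerivWithinAt
  have hinj : InjOn (fun t => a * t ^ 2) (Ioi ε) := fun s (hs : ε < s) t (ht : ε < t) h => by
    have := mul_left_cancel₀ ha.ne' h
    exact (pow_left_inj₀ (hε.trans hs.le) (hε.trans ht.le) two_ne_zero).1 this
  rw [← image_mul_sq_Ioi ha hε, integral_image_eq_integral_abs_deriv_smul measurableSet_Ioi
    hderiv hinj]
  refine setIntegral_congr_fun measurableSet_Ioi fun t (ht : ε < t) => ?_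
  rw [abs_of_pos (by have := hε.trans_lt ht; positivity)]

lemma integral_Ioi_inv_mul_exp_neg_two_mul_sq {ε : ℝ} (hε : 0 < ε) :
    ∫ t in Ioi ε, t⁻¹ * exp (-(2 * t ^ 2)) = incGamma0 (2 * ε ^ 2) / 2 := by
  rw [incGamma0, ← integral_Ioi_comp_mul_sq two_pos hε.le, eq_div_iff two_ne_zero,
    ← integral_mul_const]
  refine setIntegral_congr_fun measurableSet_Ioi fun t (ht : ε < t) => ?_
  have : t ≠ 0 := (hε.trans ht).ne'
  simp only [smul_eq_mul]
  field_simp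

lemma integral_Ioi_mul_exp_neg {b : ℝ} (hb : 0 ≤ b) :
    ∫ u in Ioi b, u * exp (-u) = (b + 1) * exp (-b) := by
  have hderiv : ∀ u ∈ Ici b, HasDerivAt (fun u => -((u + 1) * exp (-u))) (u * exp (-u)) u :=
    fun u _ => (((hasDerivAt_id' u).add_const 1).fun_mul (hasDerivAt_neg' u).exp).fun_neg
      |>.congr_deriv (by ring)
  have hlim : Tendsto (fun u => -((u + 1) * exp (-u))) atTop (𝓝 0) := by
    have h1 := tendsto_pow_mul_exp_neg_atTop_nhds_zero 1
    have h0 := tendsto_pow_mul_exp_neg_atTop_nhds_zero 0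
    simpa [add_mul] using (h1.add h0).neg
  rw [integral_Ioi_of_hasDerivAt_of_nonneg' hderiv (fun u (hu : b < u) => by
    have := hb.trans hu.le; positivity) hlim]
  ring

lemma integral_Ioi_pow_three_mul_exp_neg_two_mul_sq {ε : ℝ} (hε : 0 ≤ ε) :
    ∫ t in Ioi ε, t ^ 3 * exp (-(2 * t ^ 2)) = (1 + 2 * ε ^ 2) * exp (-(2 * ε ^ 2)) / 8 := by
  rw [eq_div_iff (by norm_num), ← integral_mul_const, add_comm,
    ← integral_Ioi_mul_exp_neg (by positivity), ← integral_Ioi_comp_mul_sq two_pos hε]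
  refine setIntegral_congr_fun measurableSet_Ioi fun t _ => ?_
  simp only [smul_eq_mul]
  ring

noncomputable def powGauss (z s : ℝ) : ℂ :=
  Complex.exp ((-(1 : ℂ) / 2 + I * z / 2) * Real.log |s|) * Real.exp (-s ^ 2)

noncomputable def cutoffPowGauss (z C ε s : ℝ) : ℂ :=
  if ε ≤ |s| then C * powGauss z s else 0

/-- `(z - (XP + PX)) f`. -/
noncomputable def dilationDefect (z : ℝ) (f : ℝ → ℂ) (s : ℝ) : ℂ :=
  z * f s + I * (2 * s * deriv f s + f s)

lemma norm_sq_powGauss (z : ℝ) {s : ℝ} (hs : s ≠ 0) :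
    ‖powGauss z s‖ ^ 2 = |s|⁻¹ * exp (-(2 * s ^ 2)) := by
  have hre : ((-(1 : ℂ) / 2 + I * z / 2) * Real.log |s|).re = -(Real.log |s| / 2) := by
    simp [Complex.mul_re]; ring
  rw [powGauss, norm_mul, Complex.norm_exp, hre, Complex.norm_real, norm_of_nonneg (exp_pos _).le,
    mul_pow, ← exp_nat_mul, ← exp_nat_mul,
    show ((2 : ℕ) : ℝ) * -(Real.log |s| / 2) = -Real.log |s| by push_cast; ring, exp_neg,
    exp_log (abs_pos.2 hs)]
  push_cast
  ring_nf

lemma hasDerivAt_powGauss (z : ℝ) {s : ℝ} (hs : s ≠ 0) :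
    HasDerivAt (powGauss z) (powGauss z s * ((-(1 : ℂ) / 2 + I * z / 2) / s - 2 * s)) s := by
  have hlog : HasDerivAt (fun x : ℝ => (Real.log |x| : ℂ)) (s⁻¹ : ℝ) s := by
    simpa only [log_abs] using (hasDerivAt_log hs).ofReal_comp
  have hgauss : HasDerivAt (fun x : ℝ => (Real.exp (-x ^ 2) : ℂ))
      (Real.exp (-s ^ 2) * (-2 * s) : ℝ) s :=
    ((hasDerivAt_pow 2 s).fun_neg.exp).ofReal_comp |>.congr_deriv (by push_cast; ring)
  refine ((hlog.const_mul _).cexp.mul hgauss).congr_deriv ?_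
  rw [powGauss]
  push_cast
  field_simp
  ring

lemma dilationDefect_powGauss (z : ℝ) {s : ℝ} (hs : s ≠ 0) :
    dilationDefect z (powGauss z) s = -4 * I * s ^ 2 * powGauss z s := by
  rw [dilationDefect, (hasDerivAt_powGauss z hs).deriv]
  have : (s : ℂ) ≠ 0 := Complex.ofReal_ne_zero.2 hs
  field_simp
  ring_nf
  rw [Complex.I_sq]
  ring

lemma dilationDefect_congr {z s : ℝ} {f g : ℝ → ℂ} (h : f =ᶠ[𝓝 s] g) :
    dilationDefect z f s = dilationDefect z g s := by
  rw [dilationDefect, dilationDefect, h.deriv_eq, h.eq_of_nhds]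

lemma dilationDefect_const_mul {z s : ℝ} {f : ℝ → ℂ} (c : ℂ)
    (hf : DifferentiableAt ℝ f s) :
    dilationDefect z (fun x => c * f x) s = c * dilationDefect z f s := by
  rw [dilationDefect, dilationDefect, deriv_const_mul c hf]
  ring

lemma dilationDefect_cutoffPowGauss {z C ε s : ℝ} (hε : 0 ≤ ε) (hs : |s| ≠ ε) :
    dilationDefect z (cutoffPowGauss z C ε) s = -4 * I * s ^ 2 * cutoffPowGauss z C ε s := by
  rcases hs.lt_or_gt with hlt | hgt
  · have hzero : cutoffPowGauss z C ε =ᶠ[𝓝 s] fun _ => 0 := by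
      filter_upwards [(isOpen_lt continuous_abs continuous_const).mem_nhds hlt]
        with x (hx : |x| < ε)
      rw [cutoffPowGauss, if_neg hx.not_ge]
    rw [dilationDefect_congr hzero, hzero.eq_of_nhds]
    simp [dilationDefect]
  · have hs0 : s ≠ 0 := abs_pos.1 (hε.trans_lt hgt)
    have hpow : cutoffPowGauss z C ε =ᶠ[𝓝 s] fun x => C * powGauss z x := by
      filter_upwards [(isOpen_lt continuous_const continuous_abs).mem_nhds hgt]
        with x (hx : ε < |x|)
      rw [cutoffPowGauss, if_pos hx.le]
    rw [dilationDefect_congr hpow, hpow.eq_of_nhds,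
      dilationDefect_const_mul _ (hasDerivAt_powGauss z hs0).differentiableAt,
      dilationDefect_powGauss z hs0]
    ring

lemma integral_ite_le_abs {ε : ℝ} (hε : 0 < ε) (h : ℝ → ℝ) :
    ∫ s, (if ε ≤ |s| then h |s| else 0) = 2 * ∫ t in Ioi ε, h t := by
  have hind : (fun t => if ε ≤ t then h t else 0) = (Ici ε).indicator h := by
    ext t; simp [indicator_apply]
  rw [integral_comp_abs (f := fun t => if ε ≤ t then h t else 0), hind,
    setIntegral_indicator measurableSet_Ici,
    inter_eq_right.2 (Ici_subset_Ioi.2 hε), integral_Ici_eq_integral_Ioi]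

lemma norm_sq_cutoffPowGauss (z C : ℝ) {ε : ℝ} (hε : 0 < ε) (s : ℝ) :
    ‖cutoffPowGauss z C ε s‖ ^ 2 =
      if ε ≤ |s| then C ^ 2 * (|s|⁻¹ * exp (-(2 * |s| ^ 2))) else 0 := by
  rw [cutoffPowGauss]
  split_ifs with hs
  · rw [norm_mul, mul_pow, Complex.norm_real, norm_eq_abs, sq_abs, sq_abs,
      norm_sq_powGauss z (abs_pos.1 (hε.trans_le hs))]
  · simp

lemma integral_norm_sq_cutoffPowGauss (z C : ℝ) {ε : ℝ} (hε : 0 < ε) :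
    ∫ s, ‖cutoffPowGauss z C ε s‖ ^ 2 = C ^ 2 * incGamma0 (2 * ε ^ 2) := by
  simp_rw [norm_sq_cutoffPowGauss z C hε]
  rw [integral_ite_le_abs hε fun t => C ^ 2 * (t⁻¹ * exp (-(2 * t ^ 2))), integral_const_mul,
    integral_Ioi_inv_mul_exp_neg_two_mul_sq hε]
  ring

lemma integral_norm_sq_dilationDefect_cutoffPowGauss (z C : ℝ) {ε : ℝ} (hε : 0 < ε) :
    ∫ s, ‖dilationDefect z (cutoffPowGauss z C ε) s‖ ^ 2 =
      4 * C ^ 2 * (1 + 2 * ε ^ 2) * exp (-(2 * ε ^ 2)) := by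
  have hae : ∀ᵐ s, ‖dilationDefect z (cutoffPowGauss z C ε) s‖ ^ 2 =
      if ε ≤ |s| then 16 * C ^ 2 * (|s| ^ 3 * exp (-(2 * |s| ^ 2))) else 0 := by
    filter_upwards [volume.ae_ne ε, volume.ae_ne (-ε)] with s hs₁ hs₂
    have hs : |s| ≠ ε := fun h => (abs_eq hε.le).1 h |>.elim hs₁ hs₂
    rw [dilationDefect_cutoffPowGauss hε.le hs, norm_mul, mul_pow, norm_sq_cutoffPowGauss z C hε]
    split_ifs with hle
    · have : |s| ≠ 0 := (hε.trans_le hle).ne'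
      simp only [norm_mul, norm_neg, Complex.norm_I, norm_pow, Complex.norm_real, norm_eq_abs]
      field_simp
      norm_num
      ring
    · rw [mul_zero]
  rw [integral_congr_ae hae,
    integral_ite_le_abs hε fun t => 16 * C ^ 2 * (t ^ 3 * exp (-(2 * t ^ 2))),
    integral_const_mul, integral_Ioi_pow_three_mul_exp_neg_two_mul_sq hε.le]
  ring

theorem approx_eigenvector_XP_add_PX (z : ℝ)
    (g : ℝ → ℝ → ℂ)
    (hg : ∀ ε s, g ε s =
      if ε ≤ |s| then
        ((Real.sqrt (incGamma0 (2 * ε ^ 2)))⁻¹ : ℝ) *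
          Complex.exp ((-(1 : ℂ) / 2 + Complex.I * z / 2) * Real.log |s|) *
          Real.exp (-s ^ 2)
      else 0) :
    (∀ ε : ℝ, 0 < ε →
      Real.sqrt (∫ s : ℝ, ‖g ε s‖ ^ 2) = 1 ∧
      Real.sqrt (∫ s : ℝ,
          ‖(z : ℂ) * g ε s + Complex.I * (2 * s * deriv (g ε) s + g ε s)‖ ^ 2) =
        2 * (Real.sqrt (incGamma0 (2 * ε ^ 2)))⁻¹ * Real.exp (-ε ^ 2) *
          Real.sqrt (1 + 2 * ε ^ 2)) ∧
    Tendsto (fun ε : ℝ => incGamma0 (2 * ε ^ 2)) (𝓝[>] 0) atTop ∧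
    Tendsto (fun ε : ℝ =>
        2 * (Real.sqrt (incGamma0 (2 * ε ^ 2)))⁻¹ * Real.exp (-ε ^ 2) *
          Real.sqrt (1 + 2 * ε ^ 2)) (𝓝[>] 0) (𝓝 0) := by
  have hg' : ∀ ε, g ε = cutoffPowGauss z (√(incGamma0 (2 * ε ^ 2)))⁻¹ ε := fun ε =>
    funext fun s => by rw [hg, cutoffPowGauss, powGauss, mul_assoc]
  have hΓ : Tendsto (fun ε : ℝ => incGamma0 (2 * ε ^ 2)) (𝓝[>] 0) atTop :=
    tendsto_incGamma0_nhdsGT_zero.comp tendsto_two_mul_sq_nhdsGT_zero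
  refine ⟨fun ε hε => ?_, hΓ, ?_⟩
  · have hpos : 0 < incGamma0 (2 * ε ^ 2) := incGamma0_pos (by positivity)
    rw [hg']
    refine ⟨?_, ?_⟩
    · rw [integral_norm_sq_cutoffPowGauss z _ hε, inv_pow, sq_sqrt hpos.le,
        inv_mul_cancel₀ hpos.ne', sqrt_one]
    · change √(∫ s, ‖dilationDefect z _ s‖ ^ 2) = _
      rw [integral_norm_sq_dilationDefect_cutoffPowGauss z _ hε,
        sqrt_eq_iff_eq_sq (by positivity) (by positivity), mul_pow, mul_pow, mul_pow,
        sq_sqrt (by positivity), ← exp_nat_mul]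
      ring_nf
  · have hcont : Continuous fun ε : ℝ => exp (-ε ^ 2) * √(1 + 2 * ε ^ 2) := by fun_prop
    have := ((tendsto_inv_atTop_zero.comp (tendsto_sqrt_atTop.comp hΓ)).const_mul 2).mul
      ((hcont.tendsto 0).mono_left nhdsWithin_le_nhds)
    simpa [mul_assoc] using this
end
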